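/- Let n, k ≥ 1, p ≥ 2, and let u : ℝⁿ → ℝᵏ be smooth with compact support. Then ∫_{ℝⁿ} |u|^{p−2} |Du|² dx ≤ ∫_{ℝⁿ} |u|^{p−2} ⟨u, −Δu⟩ dx, where both integrands are interpreted as 0 at points where u vanishes. -/

import Mathlib

open MeasureTheory RealInnerProductSpace
open scoped Classical

/-- Squared Frobenius norm of the total derivative `Du(x)`. -/
noncomputable def frobSq {n k : ℕ} (u : EuclideanSpace ℝ (Fin n) → EuclideanSpace ℝ (Fin k))
    (x : EuclideanSpace ℝ (Fin n)) : ℝ :=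
  ∑ i : Fin n, ‖fderiv ℝ u x (EuclideanSpace.single i 1)‖ ^ 2

/-- Componentwise Laplacian of a vector-valued function. -/
noncomputable def lapVec {n k : ℕ} (u : EuclideanSpace ℝ (Fin n) → EuclideanSpace ℝ (Fin k))
    (x : EuclideanSpace ℝ (Fin n)) : EuclideanSpace ℝ (Fin k) :=
  ∑ i : Fin n, iteratedFDeriv ℝ 2 u x ![EuclideanSpace.single i 1, EuclideanSpace.single i 1]

/-!
For a direction `v`, the flux `w = |u|^(p-2) ⟨u, ∂ᵥu⟩ = ∂ᵥ(|u|^p) / p` has compact support, so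
`∫ ∂ᵥw = 0`. Away from the zeros of `u`,
`∂ᵥw = |u|^(p-2) (|∂ᵥu|² + ⟨u, ∂ᵥ²u⟩) + (p-2) |u|^(p-4) ⟨u, ∂ᵥu⟩²`,
and at a zero of `u` with `p > 2` both sides vanish, since `|u|^(p-2) → 0` while `⟨u, ∂ᵥu⟩`
vanishes to first order. Dropping the nonnegative last term and summing over the coordinate
directions gives the inequality.
-/

open Filter Topology Asymptotics

section Curve

variable {F : Type*} [NormedAddCommGroup F] [InnerProductSpace ℝ F]

theorem hasDerivAt_mul_of_tendsto_zero_of_eq_zero {f g : ℝ → ℝ} {g' t : ℝ}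
    (hf : Tendsto f (𝓝 t) (𝓝 0)) (hg : HasDerivAt g g' t) (hgt : g t = 0) :
    HasDerivAt (fun s => f s * g s) 0 t := by
  rw [hasDerivAt_iff_isLittleO]
  simpa [hgt] using (isLittleO_one_iff ℝ |>.mpr hf).mul_isBigO hg.isBigO_sub

theorem HasDerivAt.norm_rpow {γ : ℝ → F} {γ' : F} {t : ℝ} (q : ℝ) (hγ : HasDerivAt γ γ' t)
    (h0 : γ t ≠ 0) :
    HasDerivAt (fun s => ‖γ s‖ ^ q) (q * ‖γ t‖ ^ q * ⟪γ t, γ'⟫ / ‖γ t‖ ^ 2) t := by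
  have hsq : ‖γ t‖ ^ 2 ≠ 0 := by positivity
  have hpow : ∀ s, ‖γ s‖ ^ q = (‖γ s‖ ^ 2) ^ (q / 2) := fun s => by
    rw [← Real.rpow_natCast, ← Real.rpow_mul (norm_nonneg _), Nat.cast_ofNat,
      mul_div_cancel₀ _ two_ne_zero]
  simp only [hpow]
  convert hγ.norm_sq.rpow_const (p := q / 2) (Or.inl hsq) using 1
  rw [Real.rpow_sub_one hsq]
  ring

-- At a zero of `γ` the last term is `0` because `x / 0 = 0`, which is the correct value.
theorem HasDerivAt.norm_rpow_mul_inner {γ γ' : ℝ → F} {γ'' : F} {t p : ℝ} (hp : 2 ≤ p)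
    (hγ : HasDerivAt γ (γ' t) t) (hγ' : HasDerivAt γ' γ'' t) :
    HasDerivAt (fun s => ‖γ s‖ ^ (p - 2) * ⟪γ s, γ' s⟫)
      (‖γ t‖ ^ (p - 2) * ‖γ' t‖ ^ 2 + ‖γ t‖ ^ (p - 2) * ⟪γ t, γ''⟫ +
        ‖γ t‖ ^ (p - 2) * ((p - 2) * ⟪γ t, γ' t⟫ ^ 2 / ‖γ t‖ ^ 2)) t := by
  have hinner : HasDerivAt (fun s => ⟪γ s, γ' s⟫) (‖γ' t‖ ^ 2 + ⟪γ t, γ''⟫) t := by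
    have h := hγ.inner ℝ hγ'
    rwa [real_inner_self_eq_norm_sq, add_comm] at h
  rcases hp.eq_or_lt with rfl | hp
  · simpa using hinner
  have hp₀ : p - 2 ≠ 0 := by linarith
  by_cases h0 : γ t = 0
  · have hnorm : Tendsto (fun s => ‖γ s‖ ^ (p - 2)) (𝓝 t) (𝓝 0) := by
      simpa [h0, Real.zero_rpow hp₀] using
        hγ.continuousAt.norm.tendsto.rpow_const (p := p - 2) (Or.inr (by linarith))
    simpa [h0, Real.zero_rpow hp₀] using
      hasDerivAt_mul_of_tendsto_zero_of_eq_zero hnorm hinner (by simp [h0])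
  · refine ((hγ.norm_rpow (p - 2) h0).mul hinner).congr_deriv ?_
    ring

end Curve

section Continuity

variable {E G : Type*} [NormedAddCommGroup E] [NormedSpace ℝ E] [NormedAddCommGroup G]
  [NormedSpace ℝ G] {f : E → G}

theorem ContDiff.continuous_fderiv_apply_const {n : WithTop ℕ∞} (hf : ContDiff ℝ n f)
    (hn : n ≠ 0) (v : E) : Continuous fun x => fderiv ℝ f x v :=
  (hf.continuous_fderiv hn).clm_apply continuous_const

theorem ContDiff.continuous_fderiv_fderiv_apply_const (hf : ContDiff ℝ 2 f) (v w : E) :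
    Continuous fun x => fderiv ℝ (fderiv ℝ f) x v w :=
  ((hf.fderiv_right le_rfl).continuous_fderiv_apply_const one_ne_zero v).clm_apply
    continuous_const

theorem HasCompactSupport.of_eq_zero_of_fderiv_eq_zero {H : Type*} [Zero H] {g : E → H}
    (hf : HasCompactSupport f)
    (hg : ∀ x, f x = 0 → fderiv ℝ f x = 0 → fderiv ℝ (fderiv ℝ f) x = 0 → g x = 0) :
    HasCompactSupport g :=
  hf.mono' fun x hx => by_contra fun hx' => hx <| hg x (image_eq_zero_of_notMem_tsupport hx')
    (fderiv_of_notMem_tsupport ℝ hx')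
    (fderiv_of_notMem_tsupport ℝ fun h => hx' (tsupport_fderiv_subset ℝ h))

end Continuity

section SmoothMap

variable {E F : Type*} [NormedAddCommGroup E] [NormedSpace ℝ E]
  [NormedAddCommGroup F] [InnerProductSpace ℝ F] {u : E → F} {p : ℝ}

theorem inner_sq_div_norm_sq_le (a b : F) : ⟪a, b⟫ ^ 2 / ‖a‖ ^ 2 ≤ ‖b‖ ^ 2 := by
  refine div_le_of_le_mul₀ (sq_nonneg _) (sq_nonneg _) ?_
  rw [← mul_pow, mul_comm, ← sq_abs]
  exact pow_le_pow_left₀ (abs_nonneg _) (abs_real_inner_le_norm a b) 2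

theorem hasLineDerivAt_norm_rpow_mul_inner_fderiv (hp : 2 ≤ p) (hu : ContDiff ℝ 2 u) (x v : E) :
    HasLineDerivAt ℝ (fun y => ‖u y‖ ^ (p - 2) * ⟪u y, fderiv ℝ u y v⟫)
      (‖u x‖ ^ (p - 2) * ‖fderiv ℝ u x v‖ ^ 2 +
        ‖u x‖ ^ (p - 2) * ⟪u x, fderiv ℝ (fderiv ℝ u) x v v⟫ +
        ‖u x‖ ^ (p - 2) * ((p - 2) * ⟪u x, fderiv ℝ u x v⟫ ^ 2 / ‖u x‖ ^ 2)) x v := by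
  have hγ : HasDerivAt (fun t : ℝ => u (x + t • v)) (fderiv ℝ u (x + (0 : ℝ) • v) v) 0 := by
    simpa [HasLineDerivAt] using ((hu.differentiable two_ne_zero) x).hasFDerivAt.hasLineDerivAt v
  have hγ' : HasDerivAt (fun t : ℝ => fderiv ℝ u (x + t • v) v)
      (fderiv ℝ (fderiv ℝ u) x v v) 0 := by
    simpa [HasLineDerivAt] using
      ((((hu.fderiv_right le_rfl).differentiable one_ne_zero) x).hasFDerivAt.clm_apply
        (hasFDerivAt_const v x)).hasLineDerivAt v
  simpa [HasLineDerivAt] using HasDerivAt.norm_rpow_mul_inner hp hγ hγ'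

variable [MeasurableSpace E] [BorelSpace E] {μ : Measure E}

omit [NormedSpace ℝ E] [InnerProductSpace ℝ F] in
theorem integrable_norm_rpow_mul [IsFiniteMeasureOnCompacts μ] {q : ℝ} (hq : 0 ≤ q)
    (hu : Continuous u) {g : E → ℝ} (hg : Continuous g) (hgs : HasCompactSupport g) :
    Integrable (fun x => ‖u x‖ ^ q * g x) μ :=
  (by fun_prop (disch := exact fun _ => Or.inr hq) : Continuous fun x => ‖u x‖ ^ q * g x)
    |>.integrable_of_hasCompactSupport hgs.mul_left

theorem integrable_norm_rpow_mul_radial [IsFiniteMeasureOnCompacts μ] (hp : 2 ≤ p)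
    (hu : ContDiff ℝ 2 u) (hsupp : HasCompactSupport u) (v : E) :
    Integrable
      (fun x => ‖u x‖ ^ (p - 2) * ((p - 2) * ⟪u x, fderiv ℝ u x v⟫ ^ 2 / ‖u x‖ ^ 2)) μ := by
  have hu₀ := hu.continuous
  have hu₁ := hu.continuous_fderiv_apply_const two_ne_zero v
  have hbound : Integrable (fun x => ‖u x‖ ^ (p - 2) * ((p - 2) * ‖fderiv ℝ u x v‖ ^ 2)) μ :=
    integrable_norm_rpow_mul (by linarith) hu₀ (by fun_prop)
      (hsupp.of_eq_zero_of_fderiv_eq_zero fun x _ hDx _ => by simp [hDx])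
  have hmeas : Measurable fun x =>
      ‖u x‖ ^ (p - 2) * ((p - 2) * ⟪u x, fderiv ℝ u x v⟫ ^ 2 / ‖u x‖ ^ 2) := by
    have := hu₀.norm.measurable
    have := (Continuous.inner (𝕜 := ℝ) hu₀ hu₁).measurable
    fun_prop
  refine hbound.mono' hmeas.aestronglyMeasurable (.of_forall fun x => ?_)
  have hp₀ : 0 ≤ p - 2 := by linarith
  rw [Real.norm_of_nonneg (by positivity), mul_div_assoc]
  gcongr
  exact inner_sq_div_norm_sq_le _ _

theorem integrable_norm_rpow_mul_sq_fderiv [IsFiniteMeasureOnCompacts μ] (hp : 2 ≤ p)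
    (hu : ContDiff ℝ 2 u) (hsupp : HasCompactSupport u) (v : E) :
    Integrable (fun x => ‖u x‖ ^ (p - 2) * ‖fderiv ℝ u x v‖ ^ 2) μ :=
  have := hu.continuous_fderiv_apply_const two_ne_zero v
  integrable_norm_rpow_mul (by linarith) hu.continuous (by fun_prop)
    (hsupp.of_eq_zero_of_fderiv_eq_zero fun x _ hDx _ => by simp [hDx])

theorem integrable_norm_rpow_mul_inner_fderiv_fderiv [IsFiniteMeasureOnCompacts μ] (hp : 2 ≤ p)
    (hu : ContDiff ℝ 2 u) (hsupp : HasCompactSupport u) (v : E) :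
    Integrable (fun x => ‖u x‖ ^ (p - 2) * ⟪u x, fderiv ℝ (fderiv ℝ u) x v v⟫) μ :=
  have hu₀ := hu.continuous
  have := hu.continuous_fderiv_fderiv_apply_const v v
  integrable_norm_rpow_mul (by linarith) hu₀ (by fun_prop)
    (hsupp.of_eq_zero_of_fderiv_eq_zero fun x hx _ _ => by simp [hx])

variable [FiniteDimensional ℝ E] [μ.IsAddHaarMeasure]

theorem integral_norm_rpow_mul_sq_fderiv (hp : 2 ≤ p) (hu : ContDiff ℝ 2 u)
    (hsupp : HasCompactSupport u) (v : E) :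
    ∫ x, ‖u x‖ ^ (p - 2) * ‖fderiv ℝ u x v‖ ^ 2 ∂μ =
      ∫ x, ‖u x‖ ^ (p - 2) * ⟪u x, -fderiv ℝ (fderiv ℝ u) x v v⟫ ∂μ -
        ∫ x, ‖u x‖ ^ (p - 2) * ((p - 2) * ⟪u x, fderiv ℝ u x v⟫ ^ 2 / ‖u x‖ ^ 2) ∂μ := by
  have hu₀ := hu.continuous
  have hu₁ := hu.continuous_fderiv_apply_const two_ne_zero v
  have hp₀ : 0 ≤ p - 2 := by linarith
  have hflux : Integrable (fun x => ‖u x‖ ^ (p - 2) * ⟪u x, fderiv ℝ u x v⟫) μ :=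
    integrable_norm_rpow_mul hp₀ hu₀ (by fun_prop)
      (hsupp.of_eq_zero_of_fderiv_eq_zero fun x hx _ _ => by simp [hx])
  have hgrad := integrable_norm_rpow_mul_sq_fderiv (μ := μ) hp hu hsupp v
  have hlap := integrable_norm_rpow_mul_inner_fderiv_fderiv (μ := μ) hp hu hsupp v
  have hrad := integrable_norm_rpow_mul_radial (μ := μ) hp hu hsupp v
  have hgrad_lap : Integrable (fun x => ‖u x‖ ^ (p - 2) * ‖fderiv ℝ u x v‖ ^ 2 +
      ‖u x‖ ^ (p - 2) * ⟪u x, fderiv ℝ (fderiv ℝ u) x v v⟫) μ := hgrad.add hlap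
  -- integration by parts against the constant function `1`
  have hibp := integral_bilinear_hasLineDerivAt_right_eq_neg_left_of_integrable
    (B := ContinuousLinearMap.mul ℝ ℝ) (g := fun _ => (1 : ℝ)) (g' := fun _ => 0)
    (by simp only [ContinuousLinearMap.mul_apply', mul_one]; exact hgrad_lap.add hrad)
    (by simp) (by simpa using hflux)
    (fun x _ => hasLineDerivAt_norm_rpow_mul_inner_fderiv hp hu x v)
    (fun x _ => by simpa using (hasFDerivAt_const (1 : ℝ) x).hasLineDerivAt v)
  simp only [ContinuousLinearMap.mul_apply', mul_zero, mul_one, integral_zero] at hibp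
  rw [integral_add hgrad_lap hrad, integral_add hgrad hlap] at hibp
  simp only [inner_neg_right, mul_neg, integral_neg]
  linarith

theorem integral_norm_rpow_mul_sq_fderiv_le (hp : 2 ≤ p) (hu : ContDiff ℝ 2 u)
    (hsupp : HasCompactSupport u) (v : E) :
    ∫ x, ‖u x‖ ^ (p - 2) * ‖fderiv ℝ u x v‖ ^ 2 ∂μ ≤
      ∫ x, ‖u x‖ ^ (p - 2) * ⟪u x, -fderiv ℝ (fderiv ℝ u) x v v⟫ ∂μ := by
  rw [integral_norm_rpow_mul_sq_fderiv hp hu hsupp v, sub_le_self_iff]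
  have hp₀ : 0 ≤ p - 2 := by linarith
  exact integral_nonneg fun x => by positivity

end SmoothMap

section Euclidean

variable {n k : ℕ} {p : ℝ} {u : EuclideanSpace ℝ (Fin n) → EuclideanSpace ℝ (Fin k)}

theorem integrable_norm_rpow_mul_frobSq (hp : 2 ≤ p) (hu : ContDiff ℝ 2 u)
    (hsupp : HasCompactSupport u) : Integrable fun x => ‖u x‖ ^ (p - 2) * frobSq u x := by
  simp only [frobSq, Finset.mul_sum]
  exact integrable_finsetSum _ fun i _ => integrable_norm_rpow_mul_sq_fderiv hp hu hsupp _

theorem integral_norm_rpow_mul_frobSq_le (hp : 2 ≤ p) (hu : ContDiff ℝ 2 u)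
    (hsupp : HasCompactSupport u) :
    ∫ x, ‖u x‖ ^ (p - 2) * frobSq u x ≤ ∫ x, ‖u x‖ ^ (p - 2) * ⟪u x, -lapVec u x⟫ := by
  simp only [frobSq, lapVec, iteratedFDeriv_two_apply, Matrix.cons_val_zero, Matrix.cons_val_one,
    ← Finset.sum_neg_distrib, inner_sum, Finset.mul_sum]
  rw [integral_finsetSum _ fun i _ => integrable_norm_rpow_mul_sq_fderiv hp hu hsupp _,
    integral_finsetSum _ fun i _ => ?_]
  · refine Finset.sum_le_sum fun i _ => ?_
    simpa using integral_norm_rpow_mul_sq_fderiv_le hp hu hsupp (EuclideanSpace.single i 1)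
  · simpa using (integrable_norm_rpow_mul_inner_fderiv_fderiv hp hu hsupp _).neg

end Euclidean

theorem stmt4_general (n k : ℕ) (p : ℝ) (hp : 2 ≤ p)
    (u : EuclideanSpace ℝ (Fin n) → EuclideanSpace ℝ (Fin k))
    (hu : ContDiff ℝ (⊤ : ℕ∞) u) (hsupp : HasCompactSupport u) :
    (∫ x, if u x = 0 then (0 : ℝ) else ‖u x‖ ^ (p - 2) * frobSq u x) ≤
      ∫ x, if u x = 0 then (0 : ℝ) else ‖u x‖ ^ (p - 2) * ⟪u x, -lapVec u x⟫ := by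
  have hu₂ : ContDiff ℝ 2 u := hu.of_le (WithTop.coe_le_coe.mpr le_top)
  have hfrob : ∀ x, 0 ≤ frobSq u x := fun x => Finset.sum_nonneg fun _ _ => sq_nonneg _
  calc _ ≤ ∫ x, ‖u x‖ ^ (p - 2) * frobSq u x := by
        refine integral_mono_of_nonneg (.of_forall fun x => ?_)
          (integrable_norm_rpow_mul_frobSq hp hu₂ hsupp) (.of_forall fun x => ?_)
        all_goals have := hfrob x; dsimp only [Pi.zero_apply]; split_ifs
        all_goals first | positivity | rfl
    _ ≤ ∫ x, ‖u x‖ ^ (p - 2) * ⟪u x, -lapVec u x⟫ := integral_norm_rpow_mul_frobSq_le hp hu₂ hsupp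
    _ = _ := integral_congr_ae (.of_forall fun x => by by_cases h : u x = 0 <;> simp [h])

/-- For smooth compactly supported `u : ℝⁿ → ℝᵏ` and `p ≥ 2`,
`∫ |u|^{p-2} |Du|² ≤ ∫ |u|^{p-2} ⟨u, -Δu⟩`, with the integrands interpreted as `0`
where `u` vanishes. -/
theorem stmt4 (n k : ℕ) (hn : 1 ≤ n) (hk : 1 ≤ k) (p : ℝ) (hp : 2 ≤ p)
    (u : EuclideanSpace ℝ (Fin n) → EuclideanSpace ℝ (Fin k))
    (hu : ContDiff ℝ (⊤ : ℕ∞) u) (hsupp : HasCompactSupport u) :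
    (∫ x, if u x = 0 then (0 : ℝ) else ‖u x‖ ^ (p - 2) * frobSq u x) ≤
      ∫ x, if u x = 0 then (0 : ℝ) else ‖u x‖ ^ (p - 2) * ⟪u x, -lapVec u x⟫ :=
  stmt4_general n k p hp u hu hsupp
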